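/- Let ρ ∈ (0,1), δ ∈ (0, ρ/8], m ≥ 700·log(1/δ)/(z·ρ²), suppose z/2 ≤ E_{x∼D}[φ(x)] ≤ 2z, and let S₁ and S₂ be two independent samples of m points each drawn i.i.d. from D, with empirical averages avg(S₁) = (1/m)∑_{x∈S₁} φ(x) and avg(S₂) = (1/m)∑_{x∈S₂} φ(x). Then P[|avg(S₁) − avg(S₂)| ≥ 3zρ/8] ≤ ρ/2. -/

import Mathlib

/-!
A sample sum `∑ φ(Sᵢ)` of `m` i.i.d. `[0,1]`-valued variables with mean `E` has moment generating
function at most `exp (m E (eˢ - 1))`, by convexity of `exp` on `[0,1]`. Chernoff's bound with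
`eˢ - 1 ≤ s + s²` then bounds each one-sided deviation `t` by `exp (-s t + m E s²)`. With
`s = 3ρ/64`, `t = 3mzρ/16` and `E ≤ 2z` this is `exp (-2mzs²) ≤ δ ≤ ρ/8` under the sample-size
assumption. If the two sample averages differ by `3zρ/8`, one of the sample sums deviates from `mE`
by `t`, and a union bound over the four tails gives `ρ/2`.
-/

open MeasureTheory ProbabilityTheory Real

lemma exp_mul_le_one_add_mul_exp_sub_one {s x : ℝ} (h0 : 0 ≤ x) (h1 : x ≤ 1) :
    exp (s * x) ≤ 1 + x * (exp s - 1) := by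
  have h := convexOn_exp.2 (Set.mem_univ 0) (Set.mem_univ s) (sub_nonneg.2 h1) h0 (by ring)
  simp only [smul_eq_mul, mul_zero, zero_add, exp_zero, mul_one] at h
  rw [mul_comm]
  linarith

/-- The moment generating function of a `[0,1]`-valued variable is dominated by that of a Poisson
variable with the same mean. -/
lemma mgf_le_exp_integral_mul_exp_sub_one {Ω : Type*} [MeasurableSpace Ω] {μ : Measure Ω}
    [IsProbabilityMeasure μ] {Y : Ω → ℝ} (hY : AEMeasurable Y μ)
    (hY01 : ∀ᵐ ω ∂μ, Y ω ∈ Set.Icc 0 1) (s : ℝ) :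
    mgf Y μ s ≤ exp ((∫ ω, Y ω ∂μ) * (exp s - 1)) := by
  have hY_int : Integrable Y μ := .of_mem_Icc 0 1 hY hY01
  calc mgf Y μ s ≤ ∫ ω, (1 + Y ω * (exp s - 1)) ∂μ :=
        integral_mono_ae (integrable_exp_mul_of_mem_Icc hY hY01)
          ((integrable_const 1).add (hY_int.mul_const _))
          (hY01.mono fun ω hω => exp_mul_le_one_add_mul_exp_sub_one hω.1 hω.2)
    _ = 1 + (∫ ω, Y ω ∂μ) * (exp s - 1) := by
        rw [integral_add (integrable_const 1) (hY_int.mul_const _), integral_const,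
          integral_mul_const, probReal_univ, one_smul]
    _ ≤ exp ((∫ ω, Y ω ∂μ) * (exp s - 1)) := by
        linarith [add_one_le_exp ((∫ ω, Y ω ∂μ) * (exp s - 1))]

section SampleSum

variable {ι X : Type*} [Fintype ι] [MeasurableSpace X] {D : Measure X}

lemma mgf_sum_pi [SigmaFinite D] (φ : X → ℝ) (s : ℝ) :
    mgf (fun S : ι → X => ∑ i, φ (S i)) (Measure.pi fun _ => D) s
      = mgf φ D s ^ Fintype.card ι := by
  simp only [mgf, Finset.mul_sum, exp_sum]
  exact integral_fintype_prod_eq_pow (fun x => exp (s * φ x))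

variable [IsProbabilityMeasure D] {φ : X → ℝ}

lemma mgf_sum_pi_le (hφ : Measurable φ) (hφ01 : ∀ x, φ x ∈ Set.Icc 0 1) (s : ℝ) :
    mgf (fun S : ι → X => ∑ i, φ (S i)) (Measure.pi fun _ => D) s
      ≤ exp (Fintype.card ι * (∫ x, φ x ∂D) * (exp s - 1)) := by
  rw [mgf_sum_pi, mul_assoc, exp_nat_mul]
  exact pow_le_pow_left₀ mgf_nonneg
    (mgf_le_exp_integral_mul_exp_sub_one hφ.aemeasurable (ae_of_all _ hφ01) s) _

lemma integrable_exp_mul_sum_pi (hφ : Measurable φ) (hφ01 : ∀ x, φ x ∈ Set.Icc 0 1) (s : ℝ) :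
    Integrable (fun S : ι → X => exp (s * ∑ i, φ (S i))) (Measure.pi fun _ => D) := by
  have hsum : Measurable fun S : ι → X => ∑ i, φ (S i) := by fun_prop
  refine integrable_exp_mul_of_mem_Icc (a := 0) (b := Fintype.card ι) hsum.aemeasurable
    (ae_of_all _ fun S => ⟨Finset.sum_nonneg fun i _ => (hφ01 _).1, ?_⟩)
  simpa using Finset.sum_le_sum fun i (_ : i ∈ Finset.univ) => (hφ01 (S i)).2

lemma measureReal_pi_sum_ge_le (hφ : Measurable φ) (hφ01 : ∀ x, φ x ∈ Set.Icc 0 1)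
    {s : ℝ} (hs0 : 0 ≤ s) (hs1 : s ≤ 1) (t : ℝ) :
    (Measure.pi fun _ : ι => D).real
        {S | Fintype.card ι * (∫ x, φ x ∂D) + t ≤ ∑ i, φ (S i)}
      ≤ exp (-s * t + Fintype.card ι * (∫ x, φ x ∂D) * s ^ 2) := by
  set c := Fintype.card ι * ∫ x, φ x ∂D
  have hc : 0 ≤ c := mul_nonneg (Nat.cast_nonneg _) (integral_nonneg fun x => (hφ01 x).1)
  have hexp : exp s - 1 ≤ s + s ^ 2 := by
    have := abs_exp_sub_one_sub_id_le (abs_le.2 ⟨by linarith, hs1⟩)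
    linarith [(abs_le.1 this).2]
  calc _ ≤ exp (-s * (c + t)) * exp (c * (exp s - 1)) :=
        (measure_ge_le_exp_mul_mgf _ hs0 (integrable_exp_mul_sum_pi hφ hφ01 s)).trans
          (mul_le_mul_of_nonneg_left (mgf_sum_pi_le hφ hφ01 s) (exp_pos _).le)
    _ ≤ exp (-s * t + c * s ^ 2) := by
        rw [← exp_add]
        exact exp_le_exp.2 (by nlinarith [mul_le_mul_of_nonneg_left hexp hc])

lemma measureReal_pi_sum_le_le (hφ : Measurable φ) (hφ01 : ∀ x, φ x ∈ Set.Icc 0 1)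
    {s : ℝ} (hs0 : 0 ≤ s) (hs1 : s ≤ 1) (t : ℝ) :
    (Measure.pi fun _ : ι => D).real
        {S | ∑ i, φ (S i) ≤ Fintype.card ι * (∫ x, φ x ∂D) - t}
      ≤ exp (-s * t + Fintype.card ι * (∫ x, φ x ∂D) * s ^ 2) := by
  set c := Fintype.card ι * ∫ x, φ x ∂D
  have hc : 0 ≤ c := mul_nonneg (Nat.cast_nonneg _) (integral_nonneg fun x => (hφ01 x).1)
  have hexp : exp (-s) - 1 ≤ -s + s ^ 2 := by
    have := abs_exp_sub_one_sub_id_le (x := -s) (abs_le.2 ⟨by linarith, by linarith⟩)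
    linarith [(abs_le.1 this).2]
  calc _ ≤ exp (-(-s) * (c - t)) * exp (c * (exp (-s) - 1)) :=
        (measure_le_le_exp_mul_mgf _ (neg_nonpos.2 hs0)
          (integrable_exp_mul_sum_pi hφ hφ01 _)).trans
          (mul_le_mul_of_nonneg_left (mgf_sum_pi_le hφ hφ01 _) (exp_pos _).le)
    _ ≤ exp (-s * t + c * s ^ 2) := by
        rw [← exp_add]
        exact exp_le_exp.2 (by nlinarith [mul_le_mul_of_nonneg_left hexp hc])

lemma measureReal_pi_abs_sum_sub_ge_le (hφ : Measurable φ) (hφ01 : ∀ x, φ x ∈ Set.Icc 0 1)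
    {s : ℝ} (hs0 : 0 ≤ s) (hs1 : s ≤ 1) (t : ℝ) :
    (Measure.pi fun _ : ι => D).real
        {S | t ≤ |∑ i, φ (S i) - Fintype.card ι * (∫ x, φ x ∂D)|}
      ≤ 2 * exp (-s * t + Fintype.card ι * (∫ x, φ x ∂D) * s ^ 2) := by
  have hsub : {S : ι → X | t ≤ |∑ i, φ (S i) - Fintype.card ι * (∫ x, φ x ∂D)|}
      ⊆ {S | Fintype.card ι * (∫ x, φ x ∂D) + t ≤ ∑ i, φ (S i)}
        ∪ {S | ∑ i, φ (S i) ≤ Fintype.card ι * (∫ x, φ x ∂D) - t} := by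
    intro S hS
    simp only [Set.mem_ofPred_eq, Set.mem_union] at hS ⊢
    rcases le_abs'.1 hS with h | h
    · exact Or.inr (by linarith)
    · exact Or.inl (by linarith)
  calc _ ≤ _ := measureReal_mono hsub
    _ ≤ _ := measureReal_union_le _ _
    _ ≤ _ := by
        rw [two_mul]
        exact add_le_add (measureReal_pi_sum_ge_le hφ hφ01 hs0 hs1 t)
          (measureReal_pi_sum_le_le hφ hφ01 hs0 hs1 t)

end SampleSum

lemma measure_prod_self_two_mul_le_abs_sub_le {α : Type*} [MeasurableSpace α] (P : Measure α)
    [IsProbabilityMeasure P] (f : α → ℝ) (c ε : ℝ) :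
    (P.prod P) {p | 2 * ε ≤ |f p.1 - f p.2|} ≤ 2 * P {a | ε ≤ |f a - c|} := by
  set A := {a | ε ≤ |f a - c|}
  have hsub : {p : α × α | 2 * ε ≤ |f p.1 - f p.2|} ⊆ A ×ˢ Set.univ ∪ Set.univ ×ˢ A := by
    intro p (hp : 2 * ε ≤ |f p.1 - f p.2|)
    by_contra h
    simp only [A, Set.mem_union, Set.mem_prod, Set.mem_univ, and_true, true_and, not_or,
      Set.mem_ofPred_eq, not_le] at h
    have := abs_sub_le (f p.1) c (f p.2)
    rw [abs_sub_comm c] at this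
    linarith
  calc _ ≤ _ := measure_mono hsub
    _ ≤ _ := measure_union_le _ _
    _ = 2 * P A := by
        rw [Measure.prod_prod, Measure.prod_prod, measure_univ, mul_one, one_mul, two_mul]

lemma mul_le_abs_sub_of_le_abs_inv_mul_sub {n ε a b : ℝ} (hn : 0 ≤ n)
    (h : ε ≤ |n⁻¹ * a - n⁻¹ * b|) : n * ε ≤ |a - b| := by
  rcases hn.eq_or_lt with rfl | hn
  · simp
  · rwa [← mul_sub, abs_mul, abs_of_pos (inv_pos.2 hn), ← div_eq_inv_mul, le_div_iff₀' hn] at h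

lemma chernoff_exponent_le_log_of_sample_size {m z ρ δ E : ℝ} (hm : 0 ≤ m) (hz : 0 < z)
    (hρ : 0 < ρ) (hδ0 : 0 < δ) (hδ1 : δ ≤ 1) (hsamp : 700 * log (1 / δ) / (z * ρ ^ 2) ≤ m)
    (hE : E ≤ 2 * z) :
    -(3 * ρ / 64) * (m * (3 * z * ρ / 16)) + m * E * (3 * ρ / 64) ^ 2 ≤ log δ := by
  have hL : 0 ≤ log (1 / δ) := log_nonneg (by rwa [le_div_iff₀ hδ0, one_mul])
  rw [div_le_iff₀ (by positivity)] at hsamp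
  rw [one_div, log_inv] at hL hsamp
  nlinarith [mul_le_mul_of_nonneg_left hE (by positivity : 0 ≤ m * ρ ^ 2)]

theorem rThreshold_estimates_close_general {X : Type*} [MeasurableSpace X]
    (D : Measure X) [IsProbabilityMeasure D]
    (φ : X → ℝ) (hφm : Measurable φ) (hφ0 : ∀ x, 0 ≤ φ x) (hφ1 : ∀ x, φ x ≤ 1)
    (z : ℝ) (hz : z ∈ Set.Ioo (0 : ℝ) 1) (m : ℕ)
    (ρ : ℝ) (hρ : ρ ∈ Set.Ioo (0 : ℝ) 1) (δ : ℝ) (hδ : δ ∈ Set.Ioc (0 : ℝ) (ρ / 8))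
    (hsamp : 700 * Real.log (1 / δ) / (z * ρ ^ 2) ≤ (m : ℝ))
    (hEhi : ∫ x, φ x ∂D ≤ 2 * z) :
    ((Measure.pi fun _ : Fin m => D).prod (Measure.pi fun _ : Fin m => D))
      {p | 3 * z * ρ / 8 ≤ |(m : ℝ)⁻¹ * (∑ i, φ (p.1 i)) - (m : ℝ)⁻¹ * ∑ i, φ (p.2 i)|}
      ≤ ENNReal.ofReal (ρ / 2) := by
  obtain ⟨hz0, -⟩ := hz
  obtain ⟨hρ0, hρ1⟩ := hρ
  obtain ⟨hδ0, hδρ⟩ := hδ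
  set P := Measure.pi fun _ : Fin m => D
  set Y : (Fin m → X) → ℝ := fun S => ∑ i, φ (S i)
  set t := m * (3 * z * ρ / 16)
  have htail : P.real {S | t ≤ |Y S - m * ∫ x, φ x ∂D|} ≤ ρ / 4 := by
    have h := measureReal_pi_abs_sum_sub_ge_le (ι := Fin m) (D := D) hφm (fun x => ⟨hφ0 x, hφ1 x⟩)
      (s := 3 * ρ / 64) (by positivity) (by linarith) t
    rw [Fintype.card_fin] at h
    have hexp := chernoff_exponent_le_log_of_sample_size (Nat.cast_nonneg m) hz0 hρ0 hδ0
      (by linarith) hsamp hEhi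
    linarith [(exp_le_exp.2 hexp).trans_eq (exp_log hδ0)]
  calc _ ≤ (P.prod P) {p | 2 * t ≤ |Y p.1 - Y p.2|} :=
        measure_mono fun p hp => by
          have := mul_le_abs_sub_of_le_abs_inv_mul_sub (Nat.cast_nonneg m) hp
          simp only [Set.mem_ofPred_eq, Y, t]
          linarith
    _ ≤ 2 * P {S | t ≤ |Y S - m * ∫ x, φ x ∂D|} :=
        measure_prod_self_two_mul_le_abs_sub_le P Y _ t
    _ ≤ 2 * ENNReal.ofReal (ρ / 4) := by
        rw [← ofReal_measureReal]
        gcongr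
    _ = ENNReal.ofReal (ρ / 2) := by
        rw [← ENNReal.ofReal_ofNat 2, ← ENNReal.ofReal_mul zero_le_two]
        ring_nf

/-- If `z/2 ≤ E_{x∼D}[φ(x)] ≤ 2z` and `m ≥ 700·log(1/δ)/(z·ρ²)`, then for two independent
i.i.d. samples `S₁, S₂` of size `m` from `D`,
`P[|avg(S₁) − avg(S₂)| ≥ 3zρ/8] ≤ ρ/2`. -/
theorem rThreshold_estimates_close {X : Type*} [MeasurableSpace X]
    (D : Measure X) [IsProbabilityMeasure D]
    (φ : X → ℝ) (hφm : Measurable φ) (hφ0 : ∀ x, 0 ≤ φ x) (hφ1 : ∀ x, φ x ≤ 1)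
    (z : ℝ) (hz : z ∈ Set.Ioo (0 : ℝ) 1) (m : ℕ) (hm : 0 < m)
    (ρ : ℝ) (hρ : ρ ∈ Set.Ioo (0 : ℝ) 1) (δ : ℝ) (hδ : δ ∈ Set.Ioc (0 : ℝ) (ρ / 8))
    (hsamp : 700 * Real.log (1 / δ) / (z * ρ ^ 2) ≤ (m : ℝ))
    (hElo : z / 2 ≤ ∫ x, φ x ∂D) (hEhi : ∫ x, φ x ∂D ≤ 2 * z) :
    ((Measure.pi fun _ : Fin m => D).prod (Measure.pi fun _ : Fin m => D))
      {p | 3 * z * ρ / 8 ≤ |(m : ℝ)⁻¹ * (∑ i, φ (p.1 i)) - (m : ℝ)⁻¹ * ∑ i, φ (p.2 i)|}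
      ≤ ENNReal.ofReal (ρ / 2) :=
  rThreshold_estimates_close_general D φ hφm hφ0 hφ1 z hz m ρ hρ δ hδ hsamp hEhi
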